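/- arXiv:2209.09327 — 3 statements merged into one kernel-verified Lean document; each statement's English description precedes it below -/
import Mathlib

section
/- (Lemma 5.1, eXPure equi-satisfiability.) Let Δ be the base symbolic-heap formula ∃w̄ · x₁↦c₁(v̄₁) * ⋯ * xₙ↦cₙ(v̄ₙ) ∧ π, where w̄ is a finite set of variables and π is a heap-independent pure formula (a predicate on stacks), and let eXPure(Δ) be the first-order formula ∃w̄ · (⋀_{1≤i≤n} xᵢ ≠ null) ∧ (⋀_{i≠j} xᵢ ≠ xⱼ) ∧ π. Then Δ and eXPure(Δ) are equi-satisfiable: there exist a stack s and a heap h with (s,h) ⊨ Δ if and only if there exists a stack s with s ⊨ eXPure(Δ). -/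
/-- A heap: a finite partial map from nonzero naturals (locations) to records;
`null = 0` is never in the domain. -/
structure Heap (Record : Type) where
  lookup : ℕ → Option Record
  null_not_dom : lookup 0 = none
  finite_dom : {n : ℕ | lookup n ≠ none}.Finite

namespace Heap

/-- The domain of a heap. -/
def dom {R : Type} (h : Heap R) : Set ℕ := {n | h.lookup n ≠ none}

/-- Two heaps are disjoint if their domains are disjoint. -/
def Disjoint {R : Type} (h₁ h₂ : Heap R) : Prop := h₁.dom ∩ h₂.dom = ∅

/-- `h` is the union of the (disjoint) heaps `h₁` and `h₂`. -/
def IsUnion {R : Type} (h h₁ h₂ : Heap R) : Prop :=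
  ∀ n, h.lookup n = (h₁.lookup n <|> h₂.lookup n)

end Heap

/-- Assertions: predicates on stack–heap pairs.  A stack is a total function `Var → ℕ`. -/
def Assn (Var Record : Type) := (Var → ℕ) → Heap Record → Prop

/-- The empty-heap assertion. -/
def emp {Var Record : Type} : Assn Var Record := fun _ h => h.dom = ∅

/-- Separating conjunction. -/
def star {Var Record : Type} (p q : Assn Var Record) : Assn Var Record :=
  fun s h => ∃ h₁ h₂, h₁.Disjoint h₂ ∧ h.IsUnion h₁ h₂ ∧ p s h₁ ∧ q s h₂

/-- Records: a node name `c` together with a value in `ℕ` for each field of `c`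
(fields of `c` are represented positionally, `arity c` being their number). -/
def Rec (Node : Type) (arity : Node → ℕ) : Type := Σ c : Node, Fin (arity c) → ℕ

/-- The points-to assertion `x ↦ c(v̄)`. -/
def pointsTo {Var Node : Type} (arity : Node → ℕ) (x : Var) (c : Node)
    (v : Fin (arity c) → Var) : Assn Var (Rec Node arity) :=
  fun s h => s x ≠ 0 ∧ h.dom = {s x} ∧ h.lookup (s x) = some ⟨c, fun i => s (v i)⟩

/-- Iterated separating conjunction of a list of assertions (`emp` for the empty list). -/
def iterStar {Var Record : Type} : List (Assn Var Record) → Assn Var Record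
  | [] => emp
  | p :: ps => star p (iterStar ps)


namespace EXPureAux

variable {R : Type}

/-- The empty heap. -/
def hempty : Heap R := ⟨fun _ => none, rfl, by simp⟩

@[simp] lemma hempty_dom : (hempty : Heap R).dom = ∅ := by
  ext m; simp [hempty, Heap.dom]

/-- A singleton heap. -/
def hsingle (a : ℕ) (r : R) (ha : a ≠ 0) : Heap R :=
  ⟨fun m => if m = a then some r else none,
   if_neg (fun h => ha h.symm),
   (Set.finite_singleton a).subset (by
      intro m hm
      simp only [Set.mem_setOf_eq] at hm
      by_contra hma
      exact hm (if_neg hma))⟩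

lemma hsingle_dom (a : ℕ) (r : R) (ha : a ≠ 0) : (hsingle a r ha).dom = {a} := by
  ext m
  by_cases hma : m = a <;> simp [hsingle, Heap.dom, hma]

/-- Union of two heaps (left-biased). -/
def hunion (h₁ h₂ : Heap R) : Heap R :=
  ⟨fun m => h₁.lookup m <|> h₂.lookup m,
   by simp [h₁.null_not_dom, h₂.null_not_dom],
   (h₁.finite_dom.union h₂.finite_dom).subset (by
      intro m hm
      simp only [Set.mem_setOf_eq] at hm
      rcases h1 : h₁.lookup m with _ | r
      · right
        simp only [Set.mem_setOf_eq]
        intro h2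
        exact hm (by simp [h1, h2])
      · left
        simp [Set.mem_setOf_eq, h1])⟩

lemma hunion_isUnion (h₁ h₂ : Heap R) : (hunion h₁ h₂).IsUnion h₁ h₂ := fun _ => rfl

lemma hunion_dom (h₁ h₂ : Heap R) : (hunion h₁ h₂).dom = h₁.dom ∪ h₂.dom := by
  ext m
  simp only [hunion, Heap.dom, Set.mem_setOf_eq, Set.mem_union]
  rcases h1 : h₁.lookup m with _ | r <;> simp [h1]

lemma isUnion_dom {h h₁ h₂ : Heap R} (hu : h.IsUnion h₁ h₂) :
    h.dom = h₁.dom ∪ h₂.dom := by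
  ext m
  simp only [Heap.dom, Set.mem_setOf_eq, Set.mem_union, hu m]
  rcases h1 : h₁.lookup m with _ | r <;> simp [h1]

/-- Forward direction: extract pure facts from the iterated star. -/
lemma fwd {Var Node : Type} (arity : Node → ℕ) :
    ∀ (n : ℕ) (x : Fin n → Var) (c : Fin n → Node)
      (v : ∀ i : Fin n, Fin (arity (c i)) → Var) (s : Var → ℕ) (h : Heap (Rec Node arity)),
      iterStar (List.ofFn fun i => pointsTo arity (x i) (c i) (v i)) s h →
      (∀ i, s (x i) ≠ 0) ∧ (∀ i j, i ≠ j → s (x i) ≠ s (x j)) ∧ (∀ i, s (x i) ∈ h.dom) := by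
  intro n
  induction n with
  | zero =>
    intro x c v s h _
    exact ⟨fun i => i.elim0, fun i => i.elim0, fun i => i.elim0⟩
  | succ n ih =>
    intro x c v s h hit
    rw [List.ofFn_succ] at hit
    obtain ⟨h₁, h₂, hdisj, hu, hp, hrest⟩ := hit
    obtain ⟨hne0, hdom1, _⟩ := hp
    obtain ⟨ihne, ihdist, ihdom⟩ :=
      ih (fun i => x i.succ) (fun i => c i.succ) (fun i => v i.succ) s h₂ hrest
    have hx0 : s (x 0) ∈ h₁.dom := by rw [hdom1]; rfl
    have hmemh : ∀ m, m ∈ h₁.dom ∨ m ∈ h₂.dom → m ∈ h.dom := by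
      intro m hm; rw [isUnion_dom hu]; exact hm
    have hdis : ∀ i : Fin n, s (x 0) ≠ s (x i.succ) := by
      intro i heq
      have : s (x i.succ) ∈ h₁.dom ∩ h₂.dom := ⟨heq ▸ hx0, ihdom i⟩
      rw [hdisj] at this
      exact this
    refine ⟨?_, ?_, ?_⟩
    · intro i
      refine Fin.cases ?_ ?_ i
      · exact hne0
      · exact fun j => ihne j
    · intro i j
      refine Fin.cases ?_ ?_ i
      · refine Fin.cases ?_ ?_ j
        · intro hij; exact absurd rfl hij
        · intro j' _; exact hdis j'
      · intro i'
        refine Fin.cases ?_ ?_ j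
        · intro _ heq; exact hdis i' heq.symm
        · intro j' hij
          exact ihdist i' j' (fun h => hij (congrArg Fin.succ h))
    · intro i
      refine Fin.cases ?_ ?_ i
      · exact hmemh _ (Or.inl hx0)
      · exact fun j => hmemh _ (Or.inr (ihdom j))

/-- Backward direction: construct a heap. -/
lemma bwd {Var Node : Type} (arity : Node → ℕ) :
    ∀ (n : ℕ) (x : Fin n → Var) (c : Fin n → Node)
      (v : ∀ i : Fin n, Fin (arity (c i)) → Var) (s : Var → ℕ),
      (∀ i, s (x i) ≠ 0) → (∀ i j, i ≠ j → s (x i) ≠ s (x j)) →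
      ∃ h : Heap (Rec Node arity),
        iterStar (List.ofFn fun i => pointsTo arity (x i) (c i) (v i)) s h ∧
        h.dom = {m | ∃ i, s (x i) = m} := by
  intro n
  induction n with
  | zero =>
    intro x c v s _ _
    refine ⟨hempty, ?_, ?_⟩
    · simp only [List.ofFn_zero]
      exact hempty_dom
    · rw [hempty_dom]
      ext m
      simp only [Set.mem_empty_iff_false, Set.mem_setOf_eq, false_iff]
      rintro ⟨i, -⟩
      exact i.elim0
  | succ n ih =>
    intro x c v s hne hdist
    obtain ⟨h₂, hit₂, hdom₂⟩ :=
      ih (fun i => x i.succ) (fun i => c i.succ) (fun i => v i.succ) s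
        (fun i => hne i.succ)
        (fun i j hij => hdist i.succ j.succ (fun h => hij (Fin.succ_injective n h)))
    set a := s (x 0) with ha
    set r : Rec Node arity := ⟨c 0, fun k => s (v 0 k)⟩ with hr
    set h₁ := hsingle a r (hne 0) with hh₁
    have hd1 : h₁.dom = {a} := hsingle_dom a r (hne 0)
    have hdisj : h₁.Disjoint h₂ := by
      rw [Heap.Disjoint, hd1, hdom₂]
      ext m
      simp only [Set.mem_inter_iff, Set.mem_singleton_iff, Set.mem_setOf_eq,
        Set.mem_empty_iff_false, iff_false, not_and]
      rintro rfl ⟨i, hi⟩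
      exact hdist i.succ 0 (Fin.succ_ne_zero i) hi
    refine ⟨hunion h₁ h₂, ?_, ?_⟩
    · rw [List.ofFn_succ]
      refine ⟨h₁, h₂, hdisj, hunion_isUnion h₁ h₂, ⟨hne 0, hd1, ?_⟩, hit₂⟩
      show (if a = a then some r else none) = some r
      rw [if_pos rfl]
    · rw [hunion_dom, hd1, hdom₂]
      ext m
      simp only [Set.mem_union, Set.mem_singleton_iff, Set.mem_setOf_eq]
      constructor
      · rintro (rfl | ⟨i, hi⟩)
        · exact ⟨0, rfl⟩
        · exact ⟨i.succ, hi⟩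
      · rintro ⟨i, hi⟩
        refine Fin.cases ?_ ?_ i hi
        · intro h; exact Or.inl h.symm
        · intro j hj; exact Or.inr ⟨j, hj⟩

end EXPureAux


/-- Lemma 5.1, eXPure equi-satisfiability:
the base symbolic heap `Δ ≡ ∃w̄ · x₁↦c₁(v̄₁) * ⋯ * xₙ↦cₙ(v̄ₙ) ∧ π`
(with `π` a heap-independent pure formula) is satisfiable iff the first-order formula
`eXPure(Δ) ≡ ∃w̄ · (⋀ᵢ xᵢ ≠ null) ∧ (⋀_{i≠j} xᵢ ≠ xⱼ) ∧ π` is satisfiable.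
Existential quantification over the finite set `w̄` is interpreted by passing to a stack
agreeing with the given one outside `w̄`. -/
theorem eXPure_equisat
    {Var Node : Type} [Countable Var] [Infinite Var] [Finite Node] [DecidableEq Var]
    (arity : Node → ℕ) (n : ℕ) (x : Fin n → Var) (c : Fin n → Node)
    (v : ∀ i : Fin n, Fin (arity (c i)) → Var)
    (w : Finset Var) (π : (Var → ℕ) → Prop) :
    (∃ (s : Var → ℕ) (h : Heap (Rec Node arity)), ∃ s' : Var → ℕ,
        (∀ u ∉ w, s' u = s u) ∧
        iterStar (List.ofFn fun i => pointsTo arity (x i) (c i) (v i)) s' h ∧ π s')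
      ↔ (∃ s : Var → ℕ, ∃ s' : Var → ℕ,
          (∀ u ∉ w, s' u = s u) ∧
          ((∀ i, s' (x i) ≠ 0) ∧ (∀ i j, i ≠ j → s' (x i) ≠ s' (x j)) ∧ π s')) := by
  constructor
  · rintro ⟨s, h, s', hw, hit, hπ⟩
    obtain ⟨hne, hdist, -⟩ := EXPureAux.fwd arity n x c v s' h hit
    exact ⟨s, s', hw, hne, hdist, hπ⟩
  · rintro ⟨s, s', hw, hne, hdist, hπ⟩
    obtain ⟨h, hit, -⟩ := EXPureAux.bwd arity n x c v s' hne hdist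
    exact ⟨s, h, s', hw, hit, hπ⟩
end

section
/- (Lemma 5.2.) Let α be a sorted (dis)equality conjunction and w̄ a finite set of variables. Then Π(α, w̄) and α are equi-satisfiable: there exists a stack satisfying α if and only if there exists a stack satisfying Π(α, w̄). -/
/-- An atom of a (dis)equality conjunction: `v₁ = v₂` or `v₁ ≠ v₂`. -/
inductive Atom (Var : Type) where
  | eq : Var → Var → Atom Var
  | ne : Var → Var → Atom Var

/-- A (dis)equality conjunction: a finite list of atoms, read conjunctively. -/
abbrev Conj (Var : Type) := List (Atom Var)

/-- A stack: a partial function from variables to values. -/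
abbrev Stack (Var Val : Type) := Var → Option Val

/-- `s'` extends `s`: `s'` agrees with `s` on the domain of `s`. -/
def Extends {Var Val : Type} (s s' : Stack Var Val) : Prop :=
  ∀ v x, s v = some x → s' v = some x

/-- An atom holds under a stack: both its variables lie in the domain of the
stack and the (dis)equality is true under the stack. -/
def Atom.holds {Var Val : Type} (s : Stack Var Val) : Atom Var → Prop
  | .eq v₁ v₂ => ∃ a b, s v₁ = some a ∧ s v₂ = some b ∧ a = b
  | .ne v₁ v₂ => ∃ a b, s v₁ = some a ∧ s v₂ = some b ∧ a ≠ b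

/-- `s ⊨ α`: every variable occurring in `α` lies in the domain of `s` and every
atom of `α` is true under `s`. -/
def Conj.sat {Var Val : Type} (s : Stack Var Val) (α : Conj Var) : Prop :=
  ∀ a ∈ α, a.holds s

/-- Substitute `v₂` for (every occurrence of) `v₁` in a variable. -/
def substVar {Var : Type} [DecidableEq Var] (v₁ v₂ u : Var) : Var :=
  if u = v₁ then v₂ else u

/-- Substitute `v₂` for `v₁` in an atom. -/
def Atom.subst {Var : Type} [DecidableEq Var] (v₁ v₂ : Var) : Atom Var → Atom Var
  | .eq a b => .eq (substVar v₁ v₂ a) (substVar v₁ v₂ b)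
  | .ne a b => .ne (substVar v₁ v₂ a) (substVar v₁ v₂ b)

/-- `α[v₂/v₁]`: substitute `v₂` for every occurrence of `v₁` in `α`. -/
def Conj.subst {Var : Type} [DecidableEq Var] (v₁ v₂ : Var) (α : Conj Var) : Conj Var :=
  α.map (Atom.subst v₁ v₂)

/-- `α` is sorted: all equality atoms precede all disequality atoms. -/
def Conj.Sorted {Var : Type} (α : Conj Var) : Prop :=
  ∃ es ds : Conj Var,
    (∀ a ∈ es, ∃ v₁ v₂, a = Atom.eq v₁ v₂) ∧
    (∀ a ∈ ds, ∃ v₁ v₂, a = Atom.ne v₁ v₂) ∧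
    α = es ++ ds

/-- The projection `Π(α, w̄)` eliminating the existentially quantified variables `w̄`;
the result `none` represents the formula `false`. -/
def proj {Var : Type} [DecidableEq Var] (w : Finset Var) : Conj Var → Option (Conj Var)
  | [] => some []
  | (Atom.eq v₁ v₂) :: rest =>
      if v₁ ∈ w then proj w (Conj.subst v₁ v₂ rest)
      else if v₂ ∈ w then proj w (Conj.subst v₂ v₁ rest)
      else (proj w rest).map (fun r => Atom.eq v₁ v₂ :: r)
  | (Atom.ne v₁ v₂) :: rest =>
      if v₁ = v₂ then none
      else if v₁ ∈ w ∨ v₂ ∈ w then proj w rest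
      else (proj w rest).map (fun r => Atom.ne v₁ v₂ :: r)
termination_by α => α.length
decreasing_by
  all_goals simp [Conj.subst]

/-- Satisfaction for the (possibly `false`) result of the projection. -/
def satP {Var Val : Type} (s : Stack Var Val) : Option (Conj Var) → Prop
  | none => False
  | some α => α.sat s

/-! Forward, `Π` only substitutes along equalities that hold and drops atoms, so every model
of `α` is a model of `Π(α, w̄)`. Backward, a model of `α` is rebuilt from a model of `Π(α, w̄)`
by recursion along `Π`, changing values only at eliminated variables: a variable eliminated through
`v₁ = v₂` takes the value of its partner, one eliminated through a dropped disequality takes a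
fresh value, which exists because `Val` is infinite. A fresh value cannot falsify the atoms after
a disequality, since in a sorted conjunction these are all disequalities. As satisfaction is
preserved by extending stacks, the rebuilt models can be taken total. -/

namespace Atom

variable {Var Val : Type}

def IsNe : Atom Var → Prop
  | .eq _ _ => False
  | .ne _ _ => True

def vars : Atom Var → List Var
  | .eq x y => [x, y]
  | .ne x y => [x, y]

@[simp]
lemma holds_eq_comp_some {g : Var → Val} {x y : Var} :
    (Atom.eq x y).holds (some ∘ g) ↔ g x = g y := by
  simp [Atom.holds, eq_comm]

@[simp]
lemma holds_ne_comp_some {g : Var → Val} {x y : Var} :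
    (Atom.ne x y).holds (some ∘ g) ↔ g x ≠ g y := by
  simp [Atom.holds]

lemma holds_eq_comm {s : Stack Var Val} {x y : Var} :
    (Atom.eq x y).holds s ↔ (Atom.eq y x).holds s := by
  simp only [Atom.holds]
  grind

lemma holds_ne_comm {s : Stack Var Val} {x y : Var} :
    (Atom.ne x y).holds s ↔ (Atom.ne y x).holds s := by
  simp only [Atom.holds]
  grind

lemma holds.mono {s s' : Stack Var Val} (h : Extends s s') {a : Atom Var} :
    a.holds s → a.holds s' := by
  cases a <;> exact fun ⟨x, y, hx, hy, hxy⟩ => ⟨x, y, h _ _ hx, h _ _ hy, hxy⟩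

lemma eq_of_holds_eq {s : Stack Var Val} {x y : Var} (h : (Atom.eq x y).holds s) : s x = s y := by
  obtain ⟨a, b, ha, hb, rfl⟩ := h
  rw [ha, hb]

lemma ne_of_holds_ne {s : Stack Var Val} {x y : Var} (h : (Atom.ne x y).holds s) : x ≠ y := by
  rintro rfl
  obtain ⟨a, b, ha, hb, hab⟩ := h
  exact hab (Option.some_injective _ (ha.symm.trans hb))

variable [DecidableEq Var]

lemma isNe_subst (u v : Var) (a : Atom Var) : (a.subst u v).IsNe ↔ a.IsNe := by
  cases a <;> rfl

lemma holds_subst (s : Stack Var Val) (u v : Var) (a : Atom Var) :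
    (a.subst u v).holds s ↔ a.holds (s ∘ substVar u v) := by
  cases a <;> rfl

lemma holds_update_of_isNe {a : Atom Var} (ha : a.IsNe) {g : Var → Val}
    (hg : a.holds (some ∘ g)) {c : Val} (hc : ∀ x ∈ a.vars, g x ≠ c) (u : Var) :
    a.holds (some ∘ Function.update g u c) := by
  cases a with
  | eq => exact ha.elim
  | ne x y =>
    simp only [vars, List.mem_cons, List.not_mem_nil, or_false, forall_eq_or_imp, forall_eq] at hc
    simp only [holds_ne_comp_some, Function.update_apply] at hg ⊢
    split_ifs <;> grind

end Atom

lemma comp_substVar {Var β : Type} [DecidableEq Var] (g : Var → β) (u v : Var) :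
    g ∘ substVar u v = Function.update g u (g v) := by
  funext z
  by_cases hz : z = u <;> simp [substVar, hz]

namespace Conj

variable {Var Val : Type}

lemma sat_cons {s : Stack Var Val} {a : Atom Var} {β : Conj Var} :
    Conj.sat s (a :: β) ↔ a.holds s ∧ β.sat s :=
  List.forall_mem_cons

lemma sat_eq_cons_comm {s : Stack Var Val} {x y : Var} {β : Conj Var} :
    Conj.sat s (Atom.eq x y :: β) ↔ Conj.sat s (Atom.eq y x :: β) := by
  rw [sat_cons, sat_cons, Atom.holds_eq_comm]

lemma sat_ne_cons_comm {s : Stack Var Val} {x y : Var} {β : Conj Var} :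
    Conj.sat s (Atom.ne x y :: β) ↔ Conj.sat s (Atom.ne y x :: β) := by
  rw [sat_cons, sat_cons, Atom.holds_ne_comm]

lemma sat.mono {s s' : Stack Var Val} (h : Extends s s') {α : Conj Var} :
    α.sat s → α.sat s' :=
  fun hα a ha => (hα a ha).mono h

lemma Sorted.pairwise {α : Conj Var} (h : α.Sorted) :
    α.Pairwise (fun a b => a.IsNe → b.IsNe) := by
  obtain ⟨es, ds, hes, hds, rfl⟩ := h
  refine List.pairwise_append.2 ⟨?_, ?_, ?_⟩
  · exact List.pairwise_of_forall_mem_list fun a ha _ _ hne => by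
      obtain ⟨x, y, rfl⟩ := hes a ha
      exact hne.elim
  · exact List.pairwise_of_forall_mem_list fun a _ b hb _ => by
      obtain ⟨x, y, rfl⟩ := hds b hb
      trivial
  · intro a _ b hb _
    obtain ⟨x, y, rfl⟩ := hds b hb
    trivial

variable [DecidableEq Var]

lemma pairwise_subst {α : Conj Var}
    (h : α.Pairwise (fun a b => a.IsNe → b.IsNe)) (u v : Var) :
    (α.subst u v).Pairwise (fun a b => a.IsNe → b.IsNe) :=
  List.pairwise_map.2 (h.imp fun hab => by simpa only [Atom.isNe_subst] using hab)

lemma sat_subst_iff {s : Stack Var Val} {u v : Var} {α : Conj Var} :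
    (α.subst u v).sat s ↔ α.sat (s ∘ substVar u v) := by
  simp only [Conj.sat, Conj.subst, List.forall_mem_map, Atom.holds_subst]

lemma sat_subst_of_holds_eq {s : Stack Var Val} {u v : Var} (huv : (Atom.eq u v).holds s)
    {α : Conj Var} (hα : α.sat s) : (α.subst u v).sat s := by
  rwa [sat_subst_iff, comp_substVar, Function.update_eq_self_iff.2 (Atom.eq_of_holds_eq huv).symm]

lemma sat_eq_cons_update_of_sat_subst {g : Var → Val} {u v : Var} {β : Conj Var}
    (h : (β.subst u v).sat (some ∘ g)) :
    Conj.sat (some ∘ Function.update g u (g v)) (Atom.eq u v :: β) := by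
  rw [sat_subst_iff, Function.comp_assoc, comp_substVar] at h
  refine sat_cons.2 ⟨?_, h⟩
  by_cases huv : v = u <;> simp [huv]

lemma exists_sat_ne_cons_update [Infinite Val] {β : Conj Var} (hβ : ∀ a ∈ β, a.IsNe)
    {g : Var → Val} (hg : β.sat (some ∘ g)) {u v : Var} (huv : u ≠ v) :
    ∃ c, Conj.sat (some ∘ Function.update g u c) (Atom.ne u v :: β) := by
  classical
  obtain ⟨c, hc⟩ :=
    Infinite.exists_notMem_finset ((v :: β.flatMap Atom.vars).toFinset.image g)
  simp only [Finset.mem_image, List.mem_toFinset, not_exists, not_and] at hc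
  refine ⟨c, sat_cons.2 ⟨?_, fun a ha => ?_⟩⟩
  · simpa [Function.update_of_ne huv.symm] using Ne.symm (hc v List.mem_cons_self)
  · exact Atom.holds_update_of_isNe (hβ a ha) (hg a ha)
      (fun x hx => hc x (List.mem_cons_of_mem _ (List.mem_flatMap.2 ⟨a, ha, hx⟩))) u

end Conj

section Projection

variable {Var Val : Type}

lemma satP.mono {s s' : Stack Var Val} (h : Extends s s') {o : Option (Conj Var)} :
    satP s o → satP s' o := by
  cases o with
  | none => exact id
  | some α => exact Conj.sat.mono h

lemma satP_map_cons {s : Stack Var Val} {a : Atom Var} {o : Option (Conj Var)} :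
    satP s (o.map (a :: ·)) ↔ a.holds s ∧ satP s o := by
  cases o with
  | none => simp [satP]
  | some β => exact Conj.sat_cons

lemma extends_comp_some_getD (s : Stack Var Val) (b : Val) :
    Extends s (some ∘ fun v => (s v).getD b) := by
  intro v x hx
  simp [hx]

variable [DecidableEq Var]

lemma update_eqOn_compl {w : Finset Var} {f g : Var → Val} (hgf : ∀ v ∉ w, g v = f v)
    {u : Var} (hu : u ∈ w) (c : Val) : ∀ v ∉ w, Function.update g u c v = f v :=
  fun v hv => (Function.update_of_ne (ne_of_mem_of_not_mem hu hv).symm c g).trans (hgf v hv)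

theorem satP_proj_of_sat (w : Finset Var) {α : Conj Var} {s : Stack Var Val} (h : α.sat s) :
    satP s (proj w α) := by
  fun_induction proj w α with
  | case1 => exact h
  | case2 v₁ v₂ rest _ ih =>
    obtain ⟨hhead, hrest⟩ := Conj.sat_cons.1 h
    exact ih (Conj.sat_subst_of_holds_eq hhead hrest)
  | case3 v₁ v₂ rest _ _ ih =>
    obtain ⟨hhead, hrest⟩ := Conj.sat_cons.1 h
    exact ih (Conj.sat_subst_of_holds_eq (Atom.holds_eq_comm.1 hhead) hrest)
  | case4 v₁ v₂ rest _ _ ih =>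
    obtain ⟨hhead, hrest⟩ := Conj.sat_cons.1 h
    exact satP_map_cons.2 ⟨hhead, ih hrest⟩
  | case5 v rest => exact Atom.ne_of_holds_ne (Conj.sat_cons.1 h).1 rfl
  | case6 v₁ v₂ rest _ _ ih => exact ih (Conj.sat_cons.1 h).2
  | case7 v₁ v₂ rest _ _ ih =>
    obtain ⟨hhead, hrest⟩ := Conj.sat_cons.1 h
    exact satP_map_cons.2 ⟨hhead, ih hrest⟩

theorem exists_sat_of_satP_proj [Infinite Val] {w : Finset Var} {α : Conj Var}
    (hα : α.Pairwise (fun a b => a.IsNe → b.IsNe)) {f : Var → Val}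
    (h : satP (some ∘ f) (proj w α)) :
    ∃ g : Var → Val, (∀ v ∉ w, g v = f v) ∧ α.sat (some ∘ g) := by
  fun_induction proj w α with
  | case1 => exact ⟨f, fun _ _ => rfl, h⟩
  | case2 v₁ v₂ rest hv₁ ih =>
    obtain ⟨g, hgf, hg⟩ := ih (Conj.pairwise_subst hα.of_cons v₁ v₂) h
    exact ⟨_, update_eqOn_compl hgf hv₁ _, Conj.sat_eq_cons_update_of_sat_subst hg⟩
  | case3 v₁ v₂ rest _ hv₂ ih =>
    obtain ⟨g, hgf, hg⟩ := ih (Conj.pairwise_subst hα.of_cons v₂ v₁) h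
    exact ⟨_, update_eqOn_compl hgf hv₂ _,
      Conj.sat_eq_cons_comm.1 (Conj.sat_eq_cons_update_of_sat_subst hg)⟩
  | case4 v₁ v₂ rest hv₁ hv₂ ih =>
    obtain ⟨hhead, hrest⟩ := satP_map_cons.1 h
    obtain ⟨g, hgf, hg⟩ := ih hα.of_cons hrest
    refine ⟨g, hgf, Conj.sat_cons.2 ⟨?_, hg⟩⟩
    simpa [hgf v₁ hv₁, hgf v₂ hv₂] using hhead
  | case5 v rest => exact h.elim
  | case6 v₁ v₂ rest hne hw ih =>
    obtain ⟨g, hgf, hg⟩ := ih hα.of_cons h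
    have hrest : ∀ a ∈ rest, a.IsNe := fun a ha => (List.pairwise_cons.1 hα).1 a ha trivial
    rcases hw with hv₁ | hv₂
    · obtain ⟨c, hc⟩ := Conj.exists_sat_ne_cons_update hrest hg hne
      exact ⟨_, update_eqOn_compl hgf hv₁ c, hc⟩
    · obtain ⟨c, hc⟩ := Conj.exists_sat_ne_cons_update hrest hg (Ne.symm hne)
      exact ⟨_, update_eqOn_compl hgf hv₂ c, Conj.sat_ne_cons_comm.1 hc⟩
  | case7 v₁ v₂ rest _ hw ih =>
    obtain ⟨hhead, hrest⟩ := satP_map_cons.1 h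
    obtain ⟨g, hgf, hg⟩ := ih hα.of_cons hrest
    rw [not_or] at hw
    refine ⟨g, hgf, Conj.sat_cons.2 ⟨?_, hg⟩⟩
    simpa [hgf v₁ hw.1, hgf v₂ hw.2] using hhead

end Projection

theorem proj_equisat_general
    {Var Val : Type} [DecidableEq Var] [Infinite Val]
    (α : Conj Var) (hsorted : α.Sorted) (w : Finset Var) :
    (∃ s : Stack Var Val, α.sat s) ↔ (∃ s : Stack Var Val, satP s (proj w α)) := by
  refine ⟨fun ⟨s, hs⟩ => ⟨s, satP_proj_of_sat w hs⟩, fun ⟨s, hs⟩ => ?_⟩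
  obtain ⟨b⟩ := (inferInstance : Nonempty Val)
  obtain ⟨g, -, hg⟩ :=
    exists_sat_of_satP_proj hsorted.pairwise (hs.mono (extends_comp_some_getD s b))
  exact ⟨_, hg⟩

/-- Lemma 5.2: for a sorted (dis)equality conjunction `α` and a finite
set `w̄` of variables, `Π(α, w̄)` and `α` are equi-satisfiable. -/
theorem proj_equisat
    {Var Val : Type} [DecidableEq Var] [Countable Var] [Infinite Var] [Infinite Val]
    (α : Conj Var) (hsorted : α.Sorted) (w : Finset Var) :
    (∃ s : Stack Var Val, α.sat s) ↔ (∃ s : Stack Var Val, satP s (proj w α)) :=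
  proj_equisat_general α hsorted w
end

section
/- (Lemma A.1, soundness of the projection.) Let α be a sorted (dis)equality conjunction, w̄ a finite set of variables, and s a stack. If s ⊨ α then s ⊨ Π(α, w̄). -/
/-! Induction along the recursion of `proj`. An equality atom `v₁ = v₂` satisfied by `s`
forces `s v₁ = s v₂`, so substituting one variable for the other preserves satisfaction of
the rest; kept atoms hold by hypothesis, and an atom `v ≠ v` is never satisfied, so the
`false` branch cannot arise. -/

section Projection

variable {Var Val : Type} {s : Stack Var Val}

theorem Conj.sat_cons_s3 {a : Atom Var} {α : Conj Var} :
    Conj.sat s (a :: α) ↔ a.holds s ∧ α.sat s :=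
  List.forall_mem_cons

theorem Atom.stack_eq_of_holds_eq {v₁ v₂ : Var} (h : (Atom.eq v₁ v₂).holds s) :
    s v₁ = s v₂ := by
  obtain ⟨x, _, hx, hy, rfl⟩ := h
  rw [hx, hy]

theorem Atom.not_holds_ne_self (v : Var) : ¬ (Atom.ne v v).holds s := by
  rintro ⟨x, y, hx, hy, hxy⟩
  exact hxy (Option.some.inj (hx.symm.trans hy))

theorem satP_map_cons_s3 {a : Atom Var} {p : Option (Conj Var)} (ha : a.holds s)
    (hp : satP s p) : satP s (p.map (a :: ·)) := by
  cases p with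
  | none => exact hp
  | some α => exact Conj.sat_cons_s3.mpr ⟨ha, hp⟩

variable [DecidableEq Var]

theorem Atom.holds_subst_s3 {v₁ v₂ : Var} (h : s v₁ = s v₂) {a : Atom Var} (ha : a.holds s) :
    (a.subst v₁ v₂).holds s := by
  have hvar : ∀ u, s (substVar v₁ v₂ u) = s u := by
    intro u
    unfold substVar
    split_ifs with hu
    · rw [hu, h]
    · rfl
  cases a with
  | eq a b => simpa only [Atom.subst, Atom.holds, hvar] using ha
  | ne a b => simpa only [Atom.subst, Atom.holds, hvar] using ha

theorem Conj.sat_subst {v₁ v₂ : Var} (h : s v₁ = s v₂) {α : Conj Var} (hα : α.sat s) :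
    (α.subst v₁ v₂).sat s := by
  simp only [Conj.sat, Conj.subst, List.forall_mem_map]
  exact fun a ha => Atom.holds_subst_s3 h (hα a ha)

end Projection

theorem proj_sound_general
    {Var Val : Type} [DecidableEq Var]
    (α : Conj Var) (w : Finset Var) (s : Stack Var Val)
    (hsat : α.sat s) :
    satP s (proj w α) := by
  induction α using proj.induct w with
  | case1 =>
    rw [proj]
    exact List.forall_mem_nil _
  | case2 v₁ v₂ rest h₁ ih =>
    obtain ⟨hhead, hrest⟩ := Conj.sat_cons_s3.mp hsat
    rw [proj, if_pos h₁]
    exact ih (Conj.sat_subst (Atom.stack_eq_of_holds_eq hhead) hrest)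
  | case3 v₁ v₂ rest h₁ h₂ ih =>
    obtain ⟨hhead, hrest⟩ := Conj.sat_cons_s3.mp hsat
    rw [proj, if_neg h₁, if_pos h₂]
    exact ih (Conj.sat_subst (Atom.stack_eq_of_holds_eq hhead).symm hrest)
  | case4 v₁ v₂ rest h₁ h₂ ih =>
    obtain ⟨hhead, hrest⟩ := Conj.sat_cons_s3.mp hsat
    rw [proj, if_neg h₁, if_neg h₂]
    exact satP_map_cons_s3 hhead (ih hrest)
  | case5 v rest =>
    exact absurd (Conj.sat_cons_s3.mp hsat).1 (Atom.not_holds_ne_self v)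
  | case6 v₁ v₂ rest h₁ h₂ ih =>
    rw [proj, if_neg h₁, if_pos h₂]
    exact ih (Conj.sat_cons_s3.mp hsat).2
  | case7 v₁ v₂ rest h₁ h₂ ih =>
    obtain ⟨hhead, hrest⟩ := Conj.sat_cons_s3.mp hsat
    rw [proj, if_neg h₁, if_neg h₂]
    exact satP_map_cons_s3 hhead (ih hrest)

/-- Lemma A.1, soundness of the projection: if a stack `s` satisfies a
sorted (dis)equality conjunction `α`, then `s` satisfies `Π(α, w̄)`. -/
theorem proj_sound
    {Var Val : Type} [DecidableEq Var] [Countable Var] [Infinite Var] [Infinite Val]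
    (α : Conj Var) (hsorted : α.Sorted) (w : Finset Var) (s : Stack Var Val)
    (hsat : α.sat s) :
    satP s (proj w α) :=
  proj_sound_general α w s hsat
end
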